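/- arXiv:1706.02953 — 3 statements merged into one kernel-verified Lean document; each statement's English description precedes it below -/
import Mathlib

section
/- If F is nonempty, then the recession cone of F equals {v ∈ H : T_i v = 0 and ⟨c_i, v⟩ ≤ 0 for all i = 1,…,m}. -/
noncomputable section
open Filter Topology RealInnerProductSpace

/-!
Along a ray `x + t v` each constraint is a quadratic polynomial in `t` with leading coefficient
`½⟪v, Tᵢ v⟫ ≥ 0` and linear coefficient `⟪x, Tᵢ v⟫ + ⟪cᵢ, v⟫`. It stays nonpositive for all
`t ≥ 0` only if the leading coefficient vanishes and the linear one is nonpositive. For a positive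
operator, `⟪v, T v⟫ = 0` forces `T v = 0`, and then the linear coefficient is just `⟪cᵢ, v⟫`.
Conversely, if `Tᵢ v = 0` and `⟪cᵢ, v⟫ ≤ 0`, each constraint is nonincreasing along the ray.
-/

lemma nonpos_of_forall_mul_le {b C : ℝ} (h : ∀ t : ℝ, 0 ≤ t → b * t ≤ C) : b ≤ 0 := by
  by_contra! hb
  have := h ((|C| + 1) / b) (by positivity)
  rw [mul_div_cancel₀ _ hb.ne'] at this
  linarith [le_abs_self C]

lemma eq_zero_and_nonpos_of_forall_quadratic_le {a b C : ℝ} (ha : 0 ≤ a)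
    (h : ∀ t : ℝ, 0 ≤ t → a * t ^ 2 + b * t ≤ C) : a = 0 ∧ b ≤ 0 := by
  have ha' : a ≤ 0 := nonpos_of_forall_mul_le (C := |C| - b - a) fun t ht => by
    have hs := h (t + 1) (by positivity)
    have : (a * (t + 1) + b - |C|) * (t + 1) ≤ 0 := by
      nlinarith [le_abs_self C, abs_nonneg C]
    linarith [nonpos_of_mul_nonpos_left this (by positivity)]
  obtain rfl : a = 0 := le_antisymm ha' ha
  exact ⟨rfl, nonpos_of_forall_mul_le fun t ht => by simpa using h t ht⟩

namespace ContinuousLinearMap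

variable {H : Type*} [NormedAddCommGroup H] [InnerProductSpace ℝ H] {T : H →L[ℝ] H}

lemma inner_add_smul_map_add_smul (hT : T.IsSymmetric) (x v : H) (t : ℝ) :
    ⟪x + t • v, T (x + t • v)⟫ = ⟪x, T x⟫ + 2 * ⟪x, T v⟫ * t + ⟪v, T v⟫ * t ^ 2 := by
  have hvx : ⟪v, T x⟫ = ⟪x, T v⟫ := by rw [real_inner_comm (T v)]; exact (hT v x).symm
  simp only [map_add, map_smul, inner_add_left, inner_add_right, real_inner_smul_left,
    real_inner_smul_right, hvx]
  ring

lemma IsPositive.apply_eq_zero_of_inner_eq_zero (hT : T.IsPositive) {v : H}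
    (hv : ⟪v, T v⟫ = 0) : T v = 0 := by
  -- `t ↦ ⟪w + t v, T (w + t v)⟫` is affine in `t` and nonnegative, hence constant.
  have horth : ∀ w, ⟪w, T v⟫ = 0 := fun w => by
    have hray : ∀ t : ℝ, -(2 * ⟪w, T v⟫) * t ≤ ⟪w, T w⟫ := fun t => by
      have := hT.inner_nonneg_right (w + t • v)
      rw [inner_add_smul_map_add_smul hT.isSymmetric, hv] at this
      linarith
    have h₁ := nonpos_of_forall_mul_le fun t _ => hray t
    have h₂ := nonpos_of_forall_mul_le (b := 2 * ⟪w, T v⟫) fun t _ =>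
      (hray (-t)).trans_eq' (by ring)
    linarith
  exact inner_self_eq_zero.mp (horth (T v))

end ContinuousLinearMap

section QuadraticConstraint

open ContinuousLinearMap

variable {H : Type*} [NormedAddCommGroup H] [InnerProductSpace ℝ H]

def quadraticFunction (T : H →L[ℝ] H) (c : H) (α : ℝ) (x : H) : ℝ :=
  1 / 2 * ⟪x, T x⟫ + ⟪c, x⟫ + α

variable {T : H →L[ℝ] H} {c : H} {α : ℝ}

lemma quadraticFunction_add_smul (hT : T.IsSymmetric) (x v : H) (t : ℝ) :
    quadraticFunction T c α (x + t • v) =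
      quadraticFunction T c α x + (⟪x, T v⟫ + ⟪c, v⟫) * t + 1 / 2 * ⟪v, T v⟫ * t ^ 2 := by
  simp only [quadraticFunction, inner_add_smul_map_add_smul hT, inner_add_right,
    real_inner_smul_right]
  ring

lemma quadraticFunction_add_smul_le (hT : T.IsSymmetric) {v : H} (hv : T v = 0)
    (hc : ⟪c, v⟫ ≤ 0) (x : H) {t : ℝ} (ht : 0 ≤ t) :
    quadraticFunction T c α (x + t • v) ≤ quadraticFunction T c α x := by
  rw [quadraticFunction_add_smul hT, hv]
  simp only [inner_zero_right, zero_add, mul_zero]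
  nlinarith

lemma apply_eq_zero_and_inner_nonpos_of_forall_quadraticFunction_le (hT : T.IsPositive)
    {x v : H} (h : ∀ t : ℝ, 0 ≤ t → quadraticFunction T c α (x + t • v) ≤ 0) :
    T v = 0 ∧ ⟪c, v⟫ ≤ 0 := by
  obtain ⟨hA, hB⟩ := eq_zero_and_nonpos_of_forall_quadratic_le (a := 1 / 2 * ⟪v, T v⟫)
    (b := ⟪x, T v⟫ + ⟪c, v⟫) (C := -quadraticFunction T c α x)
    (mul_nonneg (by norm_num) (hT.inner_nonneg_right v)) fun t ht => by
      have := h t ht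
      rw [quadraticFunction_add_smul hT.isSymmetric] at this
      linarith
  have hTv : T v = 0 := hT.apply_eq_zero_of_inner_eq_zero (by linarith)
  exact ⟨hTv, by simpa [hTv] using hB⟩

end QuadraticConstraint

theorem stmt0_general {H : Type*} [NormedAddCommGroup H] [InnerProductSpace ℝ H]
    {m : ℕ} (T : Fin m → H →L[ℝ] H) (c : Fin m → H) (α : Fin m → ℝ)
    (hsa : ∀ i, ∀ x y : H, ⟪T i x, y⟫ = ⟪x, T i y⟫)
    (hpsd : ∀ i, ∀ x : H, 0 ≤ ⟪x, T i x⟫)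
    (F : Set H)
    (hF : F = {x : H | ∀ i, (1 / 2) * ⟪x, T i x⟫ + ⟪c i, x⟫ + α i ≤ 0})
    (hne : F.Nonempty) :
    {v : H | ∀ x ∈ F, ∀ t : ℝ, 0 ≤ t → x + t • v ∈ F} =
      {v : H | ∀ i, T i v = 0 ∧ ⟪c i, v⟫ ≤ 0} := by
  have hpos : ∀ i, (T i).IsPositive := fun i =>
    (ContinuousLinearMap.isPositive_iff _).2
      ⟨hsa i, fun x => by rw [real_inner_comm]; exact hpsd i x⟩
  obtain ⟨x₀, hx₀⟩ := hne
  subst hF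
  ext v
  refine ⟨fun hv i => ?_, fun hv x hx t ht i => ?_⟩
  · exact apply_eq_zero_and_inner_nonpos_of_forall_quadraticFunction_le (hpos i)
      fun t ht => hv x₀ hx₀ t ht i
  · exact (quadraticFunction_add_smul_le (hsa i) (hv i).1 (hv i).2 x ht).trans (hx i)

/-- If the feasible set `F` of finitely many convex quadratic
inequalities is nonempty, then its recession cone
`{v : ∀ x ∈ F, ∀ t ≥ 0, x + t • v ∈ F}` equals
`{v : T_i v = 0 and ⟪c_i, v⟫ ≤ 0 for all i}`. -/
theorem stmt0 {H : Type*} [NormedAddCommGroup H] [InnerProductSpace ℝ H] [CompleteSpace H]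
    {m : ℕ} (T : Fin m → H →L[ℝ] H) (c : Fin m → H) (α : Fin m → ℝ)
    (hsa : ∀ i, ∀ x y : H, ⟪T i x, y⟫ = ⟪x, T i y⟫)
    (hpsd : ∀ i, ∀ x : H, 0 ≤ ⟪x, T i x⟫)
    (F : Set H)
    (hF : F = {x : H | ∀ i, (1 / 2) * ⟪x, T i x⟫ + ⟪c i, x⟫ + α i ≤ 0})
    (hne : F.Nonempty) :
    {v : H | ∀ x ∈ F, ∀ t : ℝ, 0 ≤ t → x + t • v ∈ F} =
      {v : H | ∀ i, T i v = 0 ∧ ⟪c i, v⟫ ≤ 0} :=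
  stmt0_general T c α hsa hpsd F hF hne
end
end

section
/- Suppose x^k ∈ F \ {0} for all k, ‖x^k‖ → ∞, and x^k/‖x^k‖ converges weakly to v̄. Then v̄ belongs to the recession cone of F, i.e., T_i v̄ = 0 and ⟨c_i, v̄⟩ ≤ 0 for all i. -/
noncomputable section
open Filter Topology RealInnerProductSpace

/-- weak convergence of a sequence in a Hilbert space -/
def WeakConv {H : Type*} [NormedAddCommGroup H] [InnerProductSpace ℝ H]
    (x : ℕ → H) (x₀ : H) : Prop :=
  ∀ y : H, Tendsto (fun k => ⟪x k, y⟫) atTop (𝓝 ⟪x₀, y⟫)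

/-!
Dividing the constraint `½⟪x, T x⟫ + ⟪c, x⟫ + α ≤ 0` by `‖x‖` and by `‖x‖²` shows that along
`u = x / ‖x‖` both `⟪c, u⟫` and `⟪u, T u⟫` are bounded above by quantities tending to `0`.
Weak limits preserve the first bound, and the quadratic form of a positive operator is weakly
lower semicontinuous, so `⟪c, v⟫ ≤ 0` and `⟪v, T v⟫ = 0`; for a positive operator the latter
forces `T v = 0`.
-/

section

variable {H : Type*} [NormedAddCommGroup H] [InnerProductSpace ℝ H]

theorem WeakConv.tendsto_inner_left {x : ℕ → H} {x₀ : H} (hx : WeakConv x x₀) (y : H) :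
    Tendsto (fun k => ⟪y, x k⟫) atTop (𝓝 ⟪y, x₀⟫) := by
  simpa only [real_inner_comm y] using hx y

namespace ContinuousLinearMap

theorem IsPositive.apply_eq_zero_of_inner_self_apply_eq_zero {T : H →L[ℝ] H}
    (hT : T.IsPositive) {v : H} (hv : ⟪v, T v⟫ = 0) : T v = 0 := by
  have hcross : ⟪v, T (T v)⟫ = ‖T v‖ ^ 2 := by
    rw [← hT.inner_left_eq_inner_right v (T v), real_inner_self_eq_norm_sq]
  -- positivity along the line `v - t • T v` is a quadratic in `t` with no constant term,
  -- so its discriminant `4 ‖T v‖ ^ 4` is nonpositive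
  have hquad : ∀ t : ℝ, 0 ≤ ⟪T v, T (T v)⟫ * (t * t) + (-2 * ‖T v‖ ^ 2) * t + 0 := fun t => by
    have := hT.inner_nonneg_right (v - t • T v)
    simp only [map_sub, map_smul, inner_sub_left, inner_sub_right, real_inner_smul_left,
      real_inner_smul_right, hv, hcross] at this
    rw [real_inner_self_eq_norm_sq] at this
    linarith
  have := discrim_le_zero hquad
  rw [discrim] at this
  exact norm_eq_zero.mp (pow_eq_zero_iff two_ne_zero |>.mp (by nlinarith [norm_nonneg (T v)]))

theorem IsPositive.inner_self_apply_le_of_weakConv {T : H →L[ℝ] H} (hT : T.IsPositive)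
    {u : ℕ → H} {v : H} (hu : WeakConv u v) {b : ℕ → ℝ} {L : ℝ}
    (hb : Tendsto b atTop (𝓝 L)) (hle : ∀ k, ⟪u k, T (u k)⟫ ≤ b k) : ⟪v, T v⟫ ≤ L := by
  -- `0 ≤ ⟪u - v, T (u - v)⟫` bounds `⟪u, T u⟫` below by an affine function of `u`
  have hlower : ∀ k, 2 * ⟪u k, T v⟫ - ⟪v, T v⟫ ≤ ⟪u k, T (u k)⟫ := fun k => by
    have := hT.inner_nonneg_right (u k - v)
    rw [map_sub, inner_sub_left, inner_sub_right, inner_sub_right,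
      ← hT.inner_left_eq_inner_right v (u k), real_inner_comm (u k) (T v)] at this
    linarith
  have hlim : Tendsto (fun k => 2 * ⟪u k, T v⟫ - ⟪v, T v⟫) atTop (𝓝 ⟪v, T v⟫) := by
    convert ((hu (T v)).const_mul 2).sub_const ⟪v, T v⟫ using 2
    ring
  exact le_of_tendsto_of_tendsto' hlim hb fun k => (hlower k).trans (hle k)

end ContinuousLinearMap

section QuadraticConstraint

variable {T : H →L[ℝ] H} {c x : H} {α : ℝ}

theorem inner_smul_le_of_quadratic_nonpos (hT : 0 ≤ ⟪x, T x⟫)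
    (hx : (1 / 2) * ⟪x, T x⟫ + ⟪c, x⟫ + α ≤ 0) {r : ℝ} (hr : 0 ≤ r) :
    ⟪c, r • x⟫ ≤ -(r * α) := by
  rw [real_inner_smul_right, ← mul_neg]
  exact mul_le_mul_of_nonneg_left (by linarith) hr

theorem inner_smul_apply_smul_le_of_quadratic_nonpos
    (hx : (1 / 2) * ⟪x, T x⟫ + ⟪c, x⟫ + α ≤ 0) (r : ℝ) :
    ⟪r • x, T (r • x)⟫ ≤ -2 * r * ⟪c, r • x⟫ - 2 * r ^ 2 * α := by
  simp only [map_smul, real_inner_smul_left, real_inner_smul_right]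
  nlinarith [sq_nonneg r]

end QuadraticConstraint

theorem ContinuousLinearMap.IsPositive.apply_eq_zero_and_inner_nonpos_of_weakConv
    {T : H →L[ℝ] H} (hT : T.IsPositive) {c : H} {α : ℝ} {x : ℕ → H}
    (hx : ∀ k, (1 / 2) * ⟪x k, T (x k)⟫ + ⟪c, x k⟫ + α ≤ 0)
    (hnorm : Tendsto (fun k => ‖x k‖) atTop atTop) {v : H}
    (hv : WeakConv (fun k => ‖x k‖⁻¹ • x k) v) :
    T v = 0 ∧ ⟪c, v⟫ ≤ 0 := by
  have hr : Tendsto (fun k => ‖x k‖⁻¹) atTop (𝓝 0) := hnorm.inv_tendsto_atTop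
  have hcv : ⟪c, v⟫ ≤ 0 := by
    refine le_of_tendsto_of_tendsto' (hv.tendsto_inner_left c)
      (by simpa using (hr.mul_const α).neg) fun k => ?_
    exact inner_smul_le_of_quadratic_nonpos (hT.inner_nonneg_right _) (hx k) (by positivity)
  have hbound : Tendsto (fun k => -2 * ‖x k‖⁻¹ * ⟪c, ‖x k‖⁻¹ • x k⟫ - 2 * ‖x k‖⁻¹ ^ 2 * α)
      atTop (𝓝 0) := by
    simpa using ((hr.const_mul (-2)).mul (hv.tendsto_inner_left c)).sub
      (((hr.pow 2).const_mul 2).mul_const α)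
  have hvTv : ⟪v, T v⟫ = 0 := le_antisymm
    (hT.inner_self_apply_le_of_weakConv hv hbound fun k =>
      inner_smul_apply_smul_le_of_quadratic_nonpos (hx k) _)
    (hT.inner_nonneg_right v)
  exact ⟨hT.apply_eq_zero_of_inner_self_apply_eq_zero hvTv, hcv⟩

end

theorem stmt2_general {H : Type*} [NormedAddCommGroup H] [InnerProductSpace ℝ H]
    {m : ℕ} (T : Fin m → H →L[ℝ] H) (c : Fin m → H) (α : Fin m → ℝ)
    (hsa : ∀ i, ∀ x y : H, ⟪T i x, y⟫ = ⟪x, T i y⟫)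
    (hpsd : ∀ i, ∀ x : H, 0 ≤ ⟪x, T i x⟫)
    (F : Set H)
    (hF : F = {x : H | ∀ i, (1 / 2) * ⟪x, T i x⟫ + ⟪c i, x⟫ + α i ≤ 0})
    (x : ℕ → H) (hxF : ∀ k, x k ∈ F)
    (hnorm : Tendsto (fun k => ‖x k‖) atTop atTop)
    (v : H) (hconv : WeakConv (fun k => ‖x k‖⁻¹ • x k) v) :
    ∀ i, T i v = 0 ∧ ⟪c i, v⟫ ≤ 0 := by
  intro i
  have hT : (T i).IsPositive :=
    (ContinuousLinearMap.isPositive_iff _).2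
      ⟨hsa i, fun y => real_inner_comm y (T i y) ▸ hpsd i y⟩
  subst hF
  exact hT.apply_eq_zero_and_inner_nonpos_of_weakConv (fun k => hxF k i) hnorm hconv

/-- If `x^k ∈ F \ {0}`, `‖x^k‖ → ∞` and `x^k/‖x^k‖ ⇀ v̄` weakly,
then `v̄` lies in the recession cone of `F`: `T_i v̄ = 0` and `⟪c_i, v̄⟫ ≤ 0` for all `i`. -/
theorem stmt2 {H : Type*} [NormedAddCommGroup H] [InnerProductSpace ℝ H] [CompleteSpace H]
    {m : ℕ} (T : Fin m → H →L[ℝ] H) (c : Fin m → H) (α : Fin m → ℝ)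
    (hsa : ∀ i, ∀ x y : H, ⟪T i x, y⟫ = ⟪x, T i y⟫)
    (hpsd : ∀ i, ∀ x : H, 0 ≤ ⟪x, T i x⟫)
    (F : Set H)
    (hF : F = {x : H | ∀ i, (1 / 2) * ⟪x, T i x⟫ + ⟪c i, x⟫ + α i ≤ 0})
    (x : ℕ → H) (hxF : ∀ k, x k ∈ F) (hx0 : ∀ k, x k ≠ 0)
    (hnorm : Tendsto (fun k => ‖x k‖) atTop atTop)
    (v : H) (hconv : WeakConv (fun k => ‖x k‖⁻¹ • x k) v) :
    ∀ i, T i v = 0 ∧ ⟪c i, v⟫ ≤ 0 :=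
  stmt2_general T c α hsa hpsd F hF x hxF hnorm v hconv
end
end

section
/- Let Q(x) = ⟨x, T x⟩ be a Legendre form on H. Then the set K of parameter tuples (T', T'_1,…,T'_m, c'_1,…,c'_m) such that there is no nonzero v with T'_i v = 0, ⟨c'_i, v⟩ ≤ 0 for all i and ⟨v, T' v⟩ ≤ 0, is open in L(H)^{m+1} × H^m, at each point whose first component defines a Legendre form. -/
noncomputable section
open Filter Topology RealInnerProductSpace

/-- weak lower semicontinuity: lower semicontinuity for the weak topology -/
def WeaklyLSC {H : Type*} [NormedAddCommGroup H] [InnerProductSpace ℝ H]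
    (Q : H → ℝ) : Prop :=
  LowerSemicontinuous fun x : WeakSpace ℝ H => Q ((toWeakSpace ℝ H).symm x)

/-- `Q` is a Legendre form. -/
def IsLegendreForm {H : Type*} [NormedAddCommGroup H] [InnerProductSpace ℝ H]
    (Q : H → ℝ) : Prop :=
  WeaklyLSC Q ∧ ∀ (x : ℕ → H) (x₀ : H), WeakConv x x₀ →
    Tendsto (fun k => Q (x k)) atTop (𝓝 (Q x₀)) → Tendsto x atTop (𝓝 x₀)

/-! If the claim failed, there would be parameters converging to `(T, Ts, cs)` together with unit
vectors `v k` that are degenerate directions for them. A weakly convergent subsequence `v k ⇀ v₀`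
inherits `Ts i v₀ = 0` and `⟪cs i, v₀⟫ ≤ 0`, and weak lower semicontinuity gives
`⟪v₀, T v₀⟫ ≤ limsup ⟪v k, T (v k)⟫ ≤ 0`; hence `v₀ = 0` by the hypothesis on `(T, Ts, cs)`.
But then `⟪v k, T (v k)⟫ → 0 = ⟪v₀, T v₀⟫`, so the Legendre property forces `v k → 0` strongly,
contradicting `‖v k‖ = 1`. -/

section WeakConvergence

variable {H : Type*} [NormedAddCommGroup H] [InnerProductSpace ℝ H]

theorem weakConv_const (a : H) : WeakConv (fun _ => a) a :=
  fun _ => tendsto_const_nhds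

theorem WeakConv.unique {x : ℕ → H} {a b : H} (ha : WeakConv x a) (hb : WeakConv x b) : a = b :=
  ext_inner_right ℝ fun y => tendsto_nhds_unique (ha y) (hb y)

theorem WeakConv.tendsto_inner {x : ℕ → H} {x₀ : H} {C : ℝ} (hx : WeakConv x x₀)
    (hC : ∀ k, ‖x k‖ ≤ C) {y : ℕ → H} {y₀ : H} (hy : Tendsto y atTop (𝓝 y₀)) :
    Tendsto (fun k => ⟪x k, y k⟫) atTop (𝓝 ⟪x₀, y₀⟫) := by
  have hsmall : Tendsto (fun k => ⟪x k, y k - y₀⟫) atTop (𝓝 0) := by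
    refine squeeze_zero_norm (fun k => (norm_inner_le_norm _ _).trans
      (mul_le_mul_of_nonneg_right (hC k) (norm_nonneg _))) ?_
    simpa using (tendsto_iff_norm_sub_tendsto_zero.mp hy).const_mul C
  simpa [inner_sub_right] using (hx y₀).add hsmall

theorem tendsto_inner_apply_sub {x : ℕ → H} {C : ℝ} (hC : ∀ k, ‖x k‖ ≤ C)
    {A : ℕ → H →L[ℝ] H} {A₀ : H →L[ℝ] H} (hA : Tendsto A atTop (𝓝 A₀)) :
    Tendsto (fun k => ⟪x k, A₀ (x k)⟫ - ⟪x k, A k (x k)⟫) atTop (𝓝 0) := by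
  have hC₀ : 0 ≤ C := (norm_nonneg _).trans (hC 0)
  refine squeeze_zero_norm (fun k => ?_)
    (by simpa using ((tendsto_iff_norm_sub_tendsto_zero.mp hA).mul_const C).const_mul C)
  calc ‖⟪x k, A₀ (x k)⟫ - ⟪x k, A k (x k)⟫‖ = ‖⟪x k, (A₀ - A k) (x k)⟫‖ := by
        rw [sub_apply, inner_sub_right]
    _ ≤ ‖x k‖ * (‖A₀ - A k‖ * ‖x k‖) :=
        (norm_inner_le_norm _ _).trans (by gcongr; exact (A₀ - A k).le_opNorm _)
    _ ≤ C * (‖A k - A₀‖ * C) := by rw [norm_sub_rev]; gcongr <;> exact hC k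

variable [CompleteSpace H]

theorem WeakConv.clm_apply {x : ℕ → H} {x₀ : H} {C : ℝ} (hx : WeakConv x x₀)
    (hC : ∀ k, ‖x k‖ ≤ C) {A : ℕ → H →L[ℝ] H} {A₀ : H →L[ℝ] H} (hA : Tendsto A atTop (𝓝 A₀)) :
    WeakConv (fun k => A k (x k)) (A₀ x₀) := fun y => by
  have hadj : Tendsto (fun k => ContinuousLinearMap.adjoint (A k) y) atTop
      (𝓝 (ContinuousLinearMap.adjoint A₀ y)) :=
    ((ContinuousLinearMap.apply ℝ H y).continuous.tendsto _).comp
      ((ContinuousLinearMap.adjoint.continuous.tendsto A₀).comp hA)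
  simpa [ContinuousLinearMap.adjoint_inner_right] using hx.tendsto_inner hC hadj

theorem WeakConv.tendsto_toWeakSpace {x : ℕ → H} {x₀ : H} (hx : WeakConv x x₀) :
    Tendsto (fun k => toWeakSpace ℝ H (x k)) atTop (𝓝 (toWeakSpace ℝ H x₀)) := by
  -- the weak topology is induced by the evaluations at continuous functionals
  erw [nhds_induced, tendsto_comap_iff, tendsto_pi_nhds]
  intro f
  have hf : ∀ z : H, f z = ⟪z, (InnerProductSpace.toDual ℝ H).symm f⟫ := fun z => by
    rw [real_inner_comm, InnerProductSpace.toDual_symm_apply]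
  show Tendsto (fun k => f (x k)) atTop (𝓝 (f x₀))
  simpa only [hf] using hx _

theorem exists_weakConv_subseq {v : ℕ → H} {C : ℝ} (hv : ∀ k, ‖v k‖ ≤ C) :
    ∃ (v₀ : H) (φ : ℕ → ℕ), StrictMono φ ∧ WeakConv (v ∘ φ) v₀ := by
  -- sequential Banach–Alaoglu in the separable closed span `M` of the sequence, then Riesz in `M`
  set M := (Submodule.span ℝ (Set.range v)).topologicalClosure
  have hvM : ∀ k, v k ∈ M := fun k =>
    Submodule.le_topologicalClosure _ (Submodule.subset_span ⟨k, rfl⟩)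
  have : TopologicalSpace.SeparableSpace M :=
    ((Set.countable_range v).isSeparable.span.closure).separableSpace
  let f : ℕ → WeakDual ℝ M := fun k => innerSL ℝ (⟨v k, hvM k⟩ : M)
  obtain ⟨g, -, φ, hφ, hg⟩ := WeakDual.isSeqCompact_closedBall ℝ M 0 C (x := f) fun k => by
    rw [Set.mem_preimage, mem_closedBall_zero_iff]
    exact (innerSL_apply_norm ℝ _).trans_le (hv k)
  refine ⟨(InnerProductSpace.toDual ℝ M).symm (WeakDual.toStrongDual g), φ, hφ, fun y => ?_⟩
  have hlim := ((WeakDual.eval_continuous (M.orthogonalProjectionOnto y)).tendsto g).comp hg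
  rw [← Submodule.inner_orthogonalProjectionOnto_eq_of_mem_left,
    InnerProductSpace.toDual_symm_apply]
  convert hlim using 2 with k
  · exact (Submodule.inner_orthogonalProjectionOnto_eq_of_mem_left (⟨v (φ k), hvM _⟩ : M) y).symm
  · rfl

end WeakConvergence

section Legendre

variable {H : Type*} [NormedAddCommGroup H] [InnerProductSpace ℝ H] [CompleteSpace H]
  {Q : H → ℝ} {x : ℕ → H} {x₀ : H} {r : ℕ → ℝ}

theorem WeaklyLSC.eventually_lt (hQ : WeaklyLSC Q) (hx : WeakConv x x₀) {c : ℝ} (hc : c < Q x₀) :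
    ∀ᶠ k in atTop, c < Q (x k) := by
  simpa using hx.tendsto_toWeakSpace.eventually (hQ (toWeakSpace ℝ H x₀) c (by simpa using hc))

theorem WeaklyLSC.le_of_weakConv (hQ : WeaklyLSC Q) (hx : WeakConv x x₀)
    (hle : ∀ k, Q (x k) ≤ r k) {ρ : ℝ} (hr : Tendsto r atTop (𝓝 ρ)) : Q x₀ ≤ ρ :=
  le_of_forall_lt_imp_le_of_dense fun _ hc =>
    ge_of_tendsto hr ((hQ.eventually_lt hx hc).mono fun k hk => (hk.trans_le (hle k)).le)

theorem IsLegendreForm.tendsto_of_weakConv (hQ : IsLegendreForm Q) (hx : WeakConv x x₀)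
    (hle : ∀ k, Q (x k) ≤ r k) (hr : Tendsto r atTop (𝓝 (Q x₀))) : Tendsto x atTop (𝓝 x₀) :=
  hQ.2 x x₀ hx <| tendsto_order.2
    ⟨fun _ hc => hQ.1.eventually_lt hx hc,
      fun _ hc => (hr.eventually_lt_const hc).mono fun k hk => (hle k).trans_lt hk⟩

end Legendre

section Degenerate

variable {H : Type*} [NormedAddCommGroup H] [InnerProductSpace ℝ H] {m : ℕ}

def IsDegenerateDirection (T : H →L[ℝ] H) (Ts : Fin m → H →L[ℝ] H) (cs : Fin m → H) (v : H) :
    Prop :=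
  (∀ i, Ts i v = 0 ∧ ⟪cs i, v⟫ ≤ 0) ∧ ⟪v, T v⟫ ≤ 0

theorem IsDegenerateDirection.smul {T : H →L[ℝ] H} {Ts : Fin m → H →L[ℝ] H} {cs : Fin m → H}
    {v : H} (h : IsDegenerateDirection T Ts cs v) {a : ℝ} (ha : 0 ≤ a) :
    IsDegenerateDirection T Ts cs (a • v) := by
  refine ⟨fun i => ⟨by simp [(h.1 i).1], ?_⟩, ?_⟩
  · rw [real_inner_smul_right]
    exact mul_nonpos_of_nonneg_of_nonpos ha (h.1 i).2
  · rw [map_smul, real_inner_smul_left, real_inner_smul_right, ← mul_assoc]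
    exact mul_nonpos_of_nonneg_of_nonpos (mul_nonneg ha ha) h.2

theorem exists_isDegenerateDirection_of_tendsto [CompleteSpace H] {T : H →L[ℝ] H}
    {Ts : Fin m → H →L[ℝ] H} {cs : Fin m → H} (hLeg : IsLegendreForm fun x : H => ⟪x, T x⟫)
    {T' : ℕ → H →L[ℝ] H} {Ts' : ℕ → Fin m → H →L[ℝ] H} {cs' : ℕ → Fin m → H}
    (hT : Tendsto T' atTop (𝓝 T)) (hTs : ∀ i, Tendsto (fun k => Ts' k i) atTop (𝓝 (Ts i)))
    (hcs : ∀ i, Tendsto (fun k => cs' k i) atTop (𝓝 (cs i))) {v : ℕ → H} (hv : ∀ k, ‖v k‖ = 1)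
    (hdeg : ∀ k, IsDegenerateDirection (T' k) (Ts' k) (cs' k) (v k)) :
    ∃ v₀, v₀ ≠ 0 ∧ IsDegenerateDirection T Ts cs v₀ := by
  obtain ⟨v₀, φ, hφ, hw⟩ := exists_weakConv_subseq fun k => (hv k).le
  have hC : ∀ k, ‖(v ∘ φ) k‖ ≤ 1 := fun k => (hv _).le
  have hsub := hφ.tendsto_atTop
  have hr := tendsto_inner_apply_sub hC (hT.comp hsub)
  have hle : ∀ k, ⟪(v ∘ φ) k, T ((v ∘ φ) k)⟫ ≤
      ⟪(v ∘ φ) k, T ((v ∘ φ) k)⟫ - ⟪(v ∘ φ) k, (T' ∘ φ) k ((v ∘ φ) k)⟫ := fun k =>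
    le_sub_self_iff _ |>.2 (hdeg (φ k)).2
  refine ⟨v₀, ?_, fun i => ⟨?_, ?_⟩, hLeg.1.le_of_weakConv hw hle hr⟩
  · rintro rfl
    have hnorm := (hLeg.tendsto_of_weakConv hw hle (by simpa using hr)).norm
    simp [hv] at hnorm
  · have h := hw.clm_apply hC ((hTs i).comp hsub)
    simp only [Function.comp_apply, ((hdeg _).1 i).1] at h
    exact h.unique (weakConv_const 0)
  · have h := hw.tendsto_inner hC ((hcs i).comp hsub)
    rw [real_inner_comm]
    exact le_of_tendsto' h fun k => by rw [real_inner_comm]; exact ((hdeg (φ k)).1 i).2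

end Degenerate

theorem stmt10_general {H : Type*} [NormedAddCommGroup H] [InnerProductSpace ℝ H] [CompleteSpace H]
    {m : ℕ} (T : H →L[ℝ] H) (Ts : Fin m → H →L[ℝ] H) (cs : Fin m → H)
    (hLeg : IsLegendreForm (fun x : H => ⟪x, T x⟫))
    (hK : ∀ v : H, v ≠ 0 → ¬((∀ i, Ts i v = 0 ∧ ⟪cs i, v⟫ ≤ 0) ∧ ⟪v, T v⟫ ≤ 0)) :
    ∃ ε > 0, ∀ (T' : H →L[ℝ] H) (Ts' : Fin m → H →L[ℝ] H) (cs' : Fin m → H),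
      (∀ x y : H, ⟪T' x, y⟫ = ⟪x, T' y⟫) →
      (∀ i, ∀ x y : H, ⟪Ts' i x, y⟫ = ⟪x, Ts' i y⟫) →
      (∀ i, ∀ x : H, 0 ≤ ⟪x, Ts' i x⟫) →
      ‖((T', Ts', cs') : (H →L[ℝ] H) × (Fin m → H →L[ℝ] H) × (Fin m → H))
        - (T, Ts, cs)‖ < ε →
      ∀ v : H, v ≠ 0 → ¬((∀ i, Ts' i v = 0 ∧ ⟪cs' i, v⟫ ≤ 0) ∧ ⟪v, T' v⟫ ≤ 0) := by
  have hnear : ∀ᶠ p in 𝓝 (T, Ts, cs), ∀ v : H, v ≠ 0 →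
      ¬IsDegenerateDirection p.1 p.2.1 p.2.2 v := by
    by_contra h
    obtain ⟨p, hp, hbad⟩ := exists_seq_forall_of_frequently (not_eventually.mp h)
    push Not at hbad
    choose u hu hdeg using hbad
    obtain ⟨v, hv, hdeg₀⟩ := exists_isDegenerateDirection_of_tendsto hLeg hp.fst_nhds
      (tendsto_pi_nhds.mp hp.snd_nhds.fst_nhds) (tendsto_pi_nhds.mp hp.snd_nhds.snd_nhds)
      (fun k => norm_smul_inv_norm (hu k)) fun k => (hdeg k).smul (by positivity)
    exact hK v hv hdeg₀
  obtain ⟨ε, hε, hball⟩ := Metric.eventually_nhds_iff.mp hnear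
  exact ⟨ε, hε, fun T' Ts' cs' _ _ _ hdist => hball (y := (T', Ts', cs')) (by rwa [dist_eq_norm])⟩

/-- The set `K` of parameter tuples `(T, T₁,…,T_m, c₁,…,c_m)` for which
there is no nonzero `v` with `T_i v = 0`, `⟪c_i, v⟫ ≤ 0` for all `i` and `⟪v, T v⟫ ≤ 0`,
is open (within the admissible parameters, with the max product norm) at each point whose
first component defines a Legendre form. -/
theorem stmt10 {H : Type*} [NormedAddCommGroup H] [InnerProductSpace ℝ H] [CompleteSpace H]
    {m : ℕ} (T : H →L[ℝ] H) (Ts : Fin m → H →L[ℝ] H) (cs : Fin m → H)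
    (hTsa : ∀ x y : H, ⟪T x, y⟫ = ⟪x, T y⟫)
    (hsa : ∀ i, ∀ x y : H, ⟪Ts i x, y⟫ = ⟪x, Ts i y⟫)
    (hpsd : ∀ i, ∀ x : H, 0 ≤ ⟪x, Ts i x⟫)
    (hLeg : IsLegendreForm (fun x : H => ⟪x, T x⟫))
    (hK : ∀ v : H, v ≠ 0 → ¬((∀ i, Ts i v = 0 ∧ ⟪cs i, v⟫ ≤ 0) ∧ ⟪v, T v⟫ ≤ 0)) :
    ∃ ε > 0, ∀ (T' : H →L[ℝ] H) (Ts' : Fin m → H →L[ℝ] H) (cs' : Fin m → H),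
      (∀ x y : H, ⟪T' x, y⟫ = ⟪x, T' y⟫) →
      (∀ i, ∀ x y : H, ⟪Ts' i x, y⟫ = ⟪x, Ts' i y⟫) →
      (∀ i, ∀ x : H, 0 ≤ ⟪x, Ts' i x⟫) →
      ‖((T', Ts', cs') : (H →L[ℝ] H) × (Fin m → H →L[ℝ] H) × (Fin m → H))
        - (T, Ts, cs)‖ < ε →
      ∀ v : H, v ≠ 0 → ¬((∀ i, Ts' i v = 0 ∧ ⟪cs' i, v⟫ ≤ 0) ∧ ⟪v, T' v⟫ ≤ 0) :=
  stmt10_general T Ts cs hLeg hK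
end
end
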